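/- Assume the Framework. Let (w_j)_{j ≥ 1} be a sequence in Ω ∖ {0} (repetitions allowed). For each n ≥ 1 let f_n ∈ H be the element with (ι f_n)(z) = ∏_{j=1}^{n} (1 − z/w_j), and let J_n := f_n − P_{[z f_n]} f_n. Then: (1) each J_n is S-inner, i.e. ⟪J_n, S^m J_n⟫ = 0 for all m ≥ 1; (2) the sequence of norms ‖J_n‖ is nondecreasing in n; and (3) there exists g ∈ H ∖ {0} such that for every w ∈ Ω the function ι g vanishes at w to order at least #{j : w_j = w}, if and only if sup{‖J_n‖ : n ≥ 1} < ∞. -/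

import Mathlib

open scoped ComplexInnerProductSpace

/-- A Hilbert space `H` of analytic functions on a bounded domain `Ω ⊆ ℂ` with `0 ∈ Ω`,
realized by an injective linear map `ι` into functions, satisfying conditions
(P1)–(P4) of Cheng–Mashreghi–Ross, together with its reproducing kernels. -/
structure RKFramework (Ω : Set ℂ) (H : Type*) [NormedAddCommGroup H]
    [InnerProductSpace ℂ H] [CompleteSpace H] where
  /-- `Ω` is open. -/
  isOpen : IsOpen Ω
  /-- `Ω` is connected. -/
  isConnected : IsConnected Ω
  /-- `Ω` is bounded. -/
  isBounded : Bornology.IsBounded Ω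
  /-- `0 ∈ Ω`. -/
  zero_mem : (0 : ℂ) ∈ Ω
  /-- the realization of elements of `H` as functions (only values on `Ω` matter). -/
  ι : H →ₗ[ℂ] (ℂ → ℂ)
  /-- `ι` is injective as a map into functions on `Ω`. -/
  ι_inj : ∀ f g : H, Set.EqOn (ι f) (ι g) Ω → f = g
  /-- each `ι f` is analytic on `Ω`. -/
  analytic : ∀ f : H, DifferentiableOn ℂ (ι f) Ω
  /-- (P1): point evaluation of every derivative is a bounded functional. -/
  eval_bounded : ∀ w ∈ Ω, ∀ j : ℕ, ∃ C : ℝ, ∀ f : H,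
    ‖iteratedDerivWithin j (ι f) Ω w‖ ≤ C * ‖f‖
  /-- (P2): the shift operator `S`. -/
  S : H →L[ℂ] H
  ι_S : ∀ f : H, ∀ z ∈ Ω, ι (S f) z = z * ι f z
  /-- (P3): the monomials `z^j` belong to `H` … -/
  p : ℕ → H
  ι_p : ∀ j : ℕ, ∀ z ∈ Ω, ι (p j) z = z ^ j
  /-- … and the polynomials are dense in `H`. -/
  span_p : (Submodule.span ℂ (Set.range p)).topologicalClosure = ⊤
  /-- (P4): the difference-quotient operators `Q_w`. -/
  Q : ℂ → H →L[ℂ] H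
  ι_Q : ∀ w ∈ Ω, ∀ f : H, ∀ z ∈ Ω, z ≠ w → ι (Q w f) z = (ι f z - ι f w) / (z - w)
  /-- the reproducing kernel `k_w` at `w ∈ Ω` … -/
  k : ℂ → H
  /-- … satisfying `⟪f, k_w⟫ = (ι f)(w)` (with the paper's inner product linear in its
  first slot; Mathlib's inner product is linear in the second slot). -/
  reproducing : ∀ w ∈ Ω, ∀ f : H, ⟪k w, f⟫ = ι f w

variable {Ω : Set ℂ} {H : Type*} [NormedAddCommGroup H] [InnerProductSpace ℂ H] [CompleteSpace H]

/-- `[zf]`: the closed linear span of `{S^n f : n ≥ 1}`. -/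
abbrev RKFramework.zspan (F : RKFramework Ω H) (f : H) : Submodule ℂ H :=
  (Submodule.span ℂ {x | ∃ n : ℕ, 1 ≤ n ∧ x = (F.S ^ n) f}).topologicalClosure

/-- `[f]`: the closed linear span of `{S^n f : n ≥ 0}`. -/
abbrev RKFramework.fullSpan (F : RKFramework Ω H) (f : H) : Submodule ℂ H :=
  (Submodule.span ℂ (Set.range fun n : ℕ => (F.S ^ n) f)).topologicalClosure

/-- The `S`-inner function `J = f − P_{[zf]} f` associated with `f`. -/
noncomputable def RKFramework.J (F : RKFramework Ω H) (f : H) : H :=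
  f - (Submodule.orthogonalProjectionOnto (F.zspan f) f : H)

/-!
`J (f n) / ‖J (f n)‖²` is the orthogonal projection of the kernel `k 0` onto `[f n]`. Since
`f (n + 1) = (1 - S / w n) f n`, the spaces `[f n]` and `[z f n]` decrease, so `‖J (f n)‖`
increases. If `‖J (f n)‖ ≤ B`, the projections of `k 0` onto the decreasing spaces `[f n]`
converge to a vector of norm at least `1 / B` lying in every `[f n]`, hence vanishing on `(w j)`.
Conversely, dividing a nonzero `g` that vanishes on `(w j)` first by `z ^ r` (its zero at the
origin) and then by `∏ (z - w j)`, one factor at a time with the operators `Q`, exhibits some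
`g'` with `ι g' 0 ≠ 0` in every `[f n]`; then `ι g' 0 = ⟪P_{[f n]} k 0, g'⟫` bounds `‖J (f n)‖`
by `‖g'‖ / ‖ι g' 0‖`.
-/

open Filter Topology Finset

theorem ContinuousLinearMap.apply_mem_of_mem_closure_span {𝕜 E G : Type*} [NormedField 𝕜]
    [SeminormedAddCommGroup E] [NormedSpace 𝕜 E] [SeminormedAddCommGroup G] [NormedSpace 𝕜 G]
    (T : E →L[𝕜] G) {s : Set E} {K : Submodule 𝕜 G} (hK : IsClosed (K : Set G))
    (hs : ∀ x ∈ s, T x ∈ K) {x : E} (hx : x ∈ (Submodule.span 𝕜 s).topologicalClosure) :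
    T x ∈ K :=
  (Submodule.span 𝕜 s).topologicalClosure_minimal (t := K.comap (T : E →ₗ[𝕜] G))
    (Submodule.span_le.2 fun y hy => hs y hy) (hK.preimage T.continuous) hx

theorem Submodule.exists_tendsto_starProjection_of_antitone {𝕜 E ι : Type*} [RCLike 𝕜]
    [NormedAddCommGroup E] [InnerProductSpace 𝕜 E] [CompleteSpace E]
    [Preorder ι] [IsDirected ι (· ≤ ·)] [Nonempty ι]
    (K : ι → Submodule 𝕜 E) [∀ i, (K i).HasOrthogonalProjection] (hK : Antitone K) (x : E) :
    ∃ y, (∀ i, y ∈ K i) ∧ Tendsto (fun i => (K i).starProjection x) atTop (𝓝 y) := by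
  -- `P_{K i} = 1 - P_{(K i)ᗮ}` and the complements `(K i)ᗮ` increase.
  have hlim := starProjection_tendsto_closure_iSup (fun i => (K i)ᗮ)
    (fun i j hij => Submodule.orthogonal_le (hK hij)) x
  simp only [starProjection_orthogonal, FunLike.coe_sub, Pi.sub_apply,
    ContinuousLinearMap.id_apply] at hlim
  have hP : Tendsto (fun i => (K i).starProjection x) atTop (𝓝 (x - _)) :=
    (tendsto_const_nhds.sub hlim).congr fun j => sub_sub_cancel x _
  refine ⟨_, fun i => ?_, hP⟩
  have hclosed : IsClosed (K i : Set E) := by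
    rw [← Submodule.orthogonal_orthogonal (K i)]
    exact Submodule.isClosed_orthogonal _
  refine hclosed.mem_of_tendsto hP ?_
  filter_upwards [eventually_ge_atTop i] with j hij
  exact hK hij (Submodule.starProjection_apply_mem _ x)

theorem analyticOrderAt_prod_sub {𝕜 : Type*} [NontriviallyNormedField 𝕜] [DecidableEq 𝕜]
    (a : ℕ → 𝕜) (n : ℕ) (ζ : 𝕜) :
    analyticOrderAt (fun z => ∏ i ∈ range n, (z - a i)) ζ = #{i ∈ range n | a i = ζ} := by
  induction n with
  | zero => simp [analyticOrderAt_eq_zero]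
  | succ n ih =>
    have hmul : (fun z => ∏ i ∈ range (n + 1), (z - a i))
        = (fun z => ∏ i ∈ range n, (z - a i)) * (· - a n) := by
      ext z; simp [prod_range_succ]
    rw [hmul, analyticOrderAt_mul (by fun_prop) (by fun_prop), ih, range_add_one,
      filter_insert]
    by_cases h : a n = ζ
    · subst h
      simp
    · simp [h, Ne.symm h]

theorem card_filter_range_le_encard (p : ℕ → Prop) [DecidablePred p] (n : ℕ) :
    (#{i ∈ range n | p i} : ℕ∞) ≤ {i | p i}.encard := by
  rw [← Set.encard_coe_eq_coe_finsetCard]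
  exact Set.encard_le_encard fun i hi => (mem_filter.1 hi).2

theorem exists_lt_card_filter_range {p : ℕ → Prop} [DecidablePred p] {s : ℕ}
    (hs : (s : ℕ∞) < {i | p i}.encard) : ∃ n, s < #{i ∈ range n | p i} := by
  obtain ⟨t, htp, ht⟩ := Set.exists_subset_encard_eq (Order.add_one_le_of_lt hs)
  obtain ⟨t, rfl⟩ :=
    (Set.finite_of_encard_eq_coe (k := s + 1) (by simpa using ht)).exists_finset_coe
  have hcard : #t = s + 1 := by exact_mod_cast (Set.encard_coe_eq_coe_finsetCard t).symm.trans ht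
  refine ⟨t.sup id + 1, ?_⟩
  calc s < #t := by omega
    _ ≤ _ := card_le_card fun i hi =>
      mem_filter.2 ⟨mem_range.2 (Nat.lt_succ_of_le (le_sup (f := id) hi)), htp hi⟩

theorem prod_neg_inv_ne_zero {K : Type*} [Field K] {w : ℕ → K} (hw : ∀ j, w j ≠ 0) (n : ℕ) :
    ∏ i ∈ range n, -(w i)⁻¹ ≠ 0 :=
  prod_ne_zero_iff.2 fun i _ => by simp [hw i]

theorem prod_one_sub_div_eq {K : Type*} [Field K] {w : ℕ → K} (hw : ∀ j, w j ≠ 0) {n : ℕ}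
    {z : K} :
    ∏ i ∈ range n, (1 - z / w i) = (∏ i ∈ range n, -(w i)⁻¹) * ∏ i ∈ range n, (z - w i) := by
  rw [← prod_mul_distrib]
  refine prod_congr rfl fun i _ => ?_
  field_simp [hw i]
  ring

namespace RKFramework

variable (F : RKFramework Ω H)

theorem analyticAt_ι (g : H) {z : ℂ} (hz : z ∈ Ω) : AnalyticAt ℂ (F.ι g) z :=
  (F.analytic g).analyticAt (F.isOpen.mem_nhds hz)

theorem ι_S_pow (n : ℕ) (g : H) {z : ℂ} (hz : z ∈ Ω) :
    F.ι ((F.S ^ n) g) z = z ^ n * F.ι g z := by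
  induction n generalizing g with
  | zero => simp
  | succ n ih => rw [pow_succ, mul_apply_eq_comp, ih, F.ι_S g z hz, pow_succ, mul_assoc]

noncomputable def iteratedDerivEval {z : ℂ} (hz : z ∈ Ω) (s : ℕ) : H →L[ℂ] ℂ :=
  LinearMap.mkContinuous
    { toFun := fun g => iteratedDerivWithin s (F.ι g) Ω z
      map_add' := fun a b => by
        have hcd (g : H) : ContDiffWithinAt ℂ s (F.ι g) Ω z :=
          ((F.analytic g).analyticOnNhd F.isOpen).contDiffOn F.isOpen.uniqueDiffOn z hz
        simp only [map_add]
        exact iteratedDerivWithin_add hz F.isOpen.uniqueDiffOn (hcd a) (hcd b)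
      map_smul' := fun c a => by
        have hcd : ContDiffWithinAt ℂ s (F.ι a) Ω z :=
          ((F.analytic a).analyticOnNhd F.isOpen).contDiffOn F.isOpen.uniqueDiffOn z hz
        simp only [map_smul, RingHom.id_apply]
        exact iteratedDerivWithin_const_smul hz F.isOpen.uniqueDiffOn c hcd }
    (F.eval_bounded z hz s).choose (F.eval_bounded z hz s).choose_spec

theorem iteratedDerivEval_apply {z : ℂ} (hz : z ∈ Ω) (s : ℕ) (g : H) :
    F.iteratedDerivEval hz s g = iteratedDerivWithin s (F.ι g) Ω z := rfl

theorem S_pow_mem_fullSpan (f : H) (n : ℕ) : (F.S ^ n) f ∈ F.fullSpan f :=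
  Submodule.le_topologicalClosure _ (Submodule.subset_span ⟨n, rfl⟩)

theorem self_mem_fullSpan (f : H) : f ∈ F.fullSpan f := by
  simpa using F.S_pow_mem_fullSpan f 0

theorem S_pow_mem_zspan (f : H) {n : ℕ} (hn : 1 ≤ n) : (F.S ^ n) f ∈ F.zspan f :=
  Submodule.le_topologicalClosure _ (Submodule.subset_span ⟨n, hn, rfl⟩)

theorem S_pow_mem_fullSpan_of_mem {f g : H} (hg : g ∈ F.fullSpan f) (n : ℕ) :
    (F.S ^ n) g ∈ F.fullSpan f := by
  refine (F.S ^ n).apply_mem_of_mem_closure_span (Submodule.isClosed_topologicalClosure _) ?_ hg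
  rintro _ ⟨m, rfl⟩
  dsimp only
  rw [← mul_apply_eq_comp, ← pow_add]
  exact F.S_pow_mem_fullSpan f _

theorem S_pow_mem_zspan_of_mem {f g : H} (hg : g ∈ F.fullSpan f) {n : ℕ} (hn : 1 ≤ n) :
    (F.S ^ n) g ∈ F.zspan f := by
  refine (F.S ^ n).apply_mem_of_mem_closure_span (Submodule.isClosed_topologicalClosure _) ?_ hg
  rintro _ ⟨m, rfl⟩
  dsimp only
  rw [← mul_apply_eq_comp, ← pow_add]
  exact F.S_pow_mem_zspan f (by omega)

theorem fullSpan_le_of_mem {f g : H} (hg : g ∈ F.fullSpan f) : F.fullSpan g ≤ F.fullSpan f :=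
  Submodule.topologicalClosure_minimal _
    (Submodule.span_le.2 <| by rintro _ ⟨n, rfl⟩; exact F.S_pow_mem_fullSpan_of_mem hg n)
    (Submodule.isClosed_topologicalClosure _)

theorem zspan_le_of_mem {f g : H} (hg : g ∈ F.fullSpan f) : F.zspan g ≤ F.zspan f :=
  Submodule.topologicalClosure_minimal _
    (Submodule.span_le.2 <| by rintro _ ⟨n, hn, rfl⟩; exact F.S_pow_mem_zspan_of_mem hg hn)
    (Submodule.isClosed_topologicalClosure _)

theorem zspan_le_fullSpan (f : H) : F.zspan f ≤ F.fullSpan f :=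
  Submodule.topologicalClosure_minimal _
    (Submodule.span_le.2 <| by rintro _ ⟨n, -, rfl⟩; exact F.S_pow_mem_fullSpan f n)
    (Submodule.isClosed_topologicalClosure _)

theorem map_mem_fullSpan {T : H →L[ℂ] H} (hT : Commute T F.S) {f x : H}
    (hx : x ∈ F.fullSpan f) : T x ∈ F.fullSpan (T f) := by
  refine T.apply_mem_of_mem_closure_span (Submodule.isClosed_topologicalClosure _) ?_ hx
  rintro _ ⟨n, rfl⟩
  dsimp only
  rw [← mul_apply_eq_comp, (hT.pow_right n).eq]
  exact F.S_pow_mem_fullSpan (T f) n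

theorem J_mem_fullSpan (f : H) : F.J f ∈ F.fullSpan f :=
  sub_mem (F.self_mem_fullSpan f) (F.zspan_le_fullSpan f (Submodule.coe_mem _))

theorem inner_J_eq_zero_of_mem_zspan {f v : H} (hv : v ∈ F.zspan f) : ⟪F.J f, v⟫ = 0 :=
  Submodule.inner_left_of_mem_orthogonal hv
    (Submodule.sub_starProjection_mem_orthogonal (K := F.zspan f) f)

theorem inner_J_S_pow_J (f : H) {m : ℕ} (hm : 1 ≤ m) : ⟪F.J f, (F.S ^ m) (F.J f)⟫ = 0 :=
  F.inner_J_eq_zero_of_mem_zspan (F.S_pow_mem_zspan_of_mem (F.J_mem_fullSpan f) hm)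

theorem norm_J_le {f v : H} (hv : v ∈ F.zspan f) : ‖F.J f‖ ≤ ‖f - v‖ := by
  rw [J, ← Submodule.starProjection_apply, Submodule.starProjection_minimal]
  exact ciInf_le ⟨0, by rintro _ ⟨_, rfl⟩; positivity⟩ (⟨v, hv⟩ : F.zspan f)

theorem norm_J_le_norm_J {f g : H} (hgf : g - f ∈ F.zspan f) : ‖F.J f‖ ≤ ‖F.J g‖ := by
  have hg : g ∈ F.fullSpan f := by
    simpa using add_mem (F.zspan_le_fullSpan f hgf) (F.self_mem_fullSpan f)
  have hmem : (f - g) + ↑(Submodule.orthogonalProjectionOnto (F.zspan g) g) ∈ F.zspan f :=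
    add_mem (by simpa using neg_mem hgf) (F.zspan_le_of_mem hg (Submodule.coe_mem _))
  convert F.norm_J_le hmem using 2
  rw [J]
  abel

theorem ι_zero_eq_zero_of_mem_zspan {f v : H} (hv : v ∈ F.zspan f) : F.ι v 0 = 0 := by
  rw [← F.reproducing 0 F.zero_mem]
  refine (innerSL ℂ (F.k 0)).apply_mem_of_mem_closure_span (K := ⊥) isClosed_singleton ?_ hv
  rintro _ ⟨n, hn, rfl⟩
  rw [Submodule.mem_bot, innerSL_apply_apply, F.reproducing 0 F.zero_mem,
    F.ι_S_pow n f F.zero_mem, zero_pow (by omega), zero_mul]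

theorem ι_J_zero (f : H) : F.ι (F.J f) 0 = F.ι f 0 := by
  rw [J, map_sub, Pi.sub_apply, F.ι_zero_eq_zero_of_mem_zspan (Submodule.coe_mem _), sub_zero]

theorem J_ne_zero {f : H} (hf0 : F.ι f 0 = 1) : F.J f ≠ 0 := by
  intro h
  have := F.ι_J_zero f
  rw [h, map_zero, hf0] at this
  exact zero_ne_one this

theorem starProjection_fullSpan_k_zero {f : H} (hf0 : F.ι f 0 = 1) :
    (F.fullSpan f).starProjection (F.k 0) = ((‖F.J f‖ ^ 2 : ℝ) : ℂ)⁻¹ • F.J f := by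
  have hJ : (‖F.J f‖ : ℂ) ≠ 0 := by simpa using F.J_ne_zero hf0
  refine Submodule.eq_starProjection_of_mem_of_inner_eq_zero
    (Submodule.smul_mem _ _ (F.J_mem_fullSpan f)) fun v hv => ?_
  refine (innerSL ℂ (F.k 0 - ((‖F.J f‖ ^ 2 : ℝ) : ℂ)⁻¹ • F.J f)).apply_mem_of_mem_closure_span
    (K := ⊥) isClosed_singleton ?_ hv
  rintro _ ⟨m, rfl⟩
  rw [Submodule.mem_bot, innerSL_apply_apply, inner_sub_left, inner_smul_left,
    F.reproducing 0 F.zero_mem, F.ι_S_pow m f F.zero_mem]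
  rcases Nat.eq_zero_or_pos m with rfl | hm
  · have hJf : ⟪F.J f, f⟫ = ⟪F.J f, F.J f⟫ := by
      rw [← sub_eq_zero, ← inner_sub_right]
      exact F.inner_J_eq_zero_of_mem_zspan (by simp [J])
    simp only [pow_zero, one_mul, hf0, one_apply_eq_self, hJf, inner_self_eq_norm_sq_to_K,
      map_inv₀, map_pow, Complex.conj_ofReal, Complex.ofReal_pow]
    exact sub_eq_zero.2 (inv_mul_cancel₀ (pow_ne_zero 2 hJ)).symm
  · rw [zero_pow hm.ne', zero_mul,
      F.inner_J_eq_zero_of_mem_zspan (F.S_pow_mem_zspan f hm), mul_zero, sub_zero]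

theorem norm_starProjection_fullSpan_k_zero {f : H} (hf0 : F.ι f 0 = 1) :
    ‖(F.fullSpan f).starProjection (F.k 0)‖ = ‖F.J f‖⁻¹ := by
  have hJ : 0 < ‖F.J f‖ := norm_pos_iff.2 (F.J_ne_zero hf0)
  rw [F.starProjection_fullSpan_k_zero hf0, norm_smul, norm_inv, Complex.norm_real,
    Real.norm_of_nonneg (by positivity)]
  field_simp

theorem norm_J_mul_norm_ι_zero_le {f g : H} (hf0 : F.ι f 0 = 1) (hg : g ∈ F.fullSpan f) :
    ‖F.J f‖ * ‖F.ι g 0‖ ≤ ‖g‖ := by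
  have hJ : 0 < ‖F.J f‖ := norm_pos_iff.2 (F.J_ne_zero hf0)
  have hval : F.ι g 0 = ⟪(F.fullSpan f).starProjection (F.k 0), g⟫ := by
    rw [Submodule.inner_starProjection_left_eq_right,
      (Submodule.starProjection_eq_self_iff).2 hg, F.reproducing 0 F.zero_mem]
  calc ‖F.J f‖ * ‖F.ι g 0‖
      ≤ ‖F.J f‖ * (‖(F.fullSpan f).starProjection (F.k 0)‖ * ‖g‖) := by
        rw [hval]; gcongr; exact norm_inner_le_norm _ _
    _ = ‖g‖ := by
        rw [F.norm_starProjection_fullSpan_k_zero hf0, ← mul_assoc, mul_inv_cancel₀ hJ.ne',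
          one_mul]

noncomputable def shiftProd (a : ℕ → ℂ) : ℕ → H →L[ℂ] H
  | 0 => 1
  | n + 1 => shiftProd a n * (F.S - a n • 1)

theorem ι_S_sub_smul (a : ℂ) (h : H) {z : ℂ} (hz : z ∈ Ω) :
    F.ι ((F.S - a • 1) h) z = (z - a) * F.ι h z := by
  simp [F.ι_S h z hz, sub_mul]

theorem ι_shiftProd (a : ℕ → ℂ) (n : ℕ) (h : H) {z : ℂ} (hz : z ∈ Ω) :
    F.ι (F.shiftProd a n h) z = (∏ i ∈ range n, (z - a i)) * F.ι h z := by
  induction n generalizing h with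
  | zero => simp [shiftProd]
  | succ n ih => rw [shiftProd, mul_apply_eq_comp, ih, F.ι_S_sub_smul _ _ hz, prod_range_succ,
      mul_assoc]

theorem commute_shiftProd (a : ℕ → ℂ) (n : ℕ) : Commute (F.shiftProd a n) F.S := by
  induction n with
  | zero => exact Commute.one_left _
  | succ n ih => exact ih.mul_left ((Commute.refl _).sub_left ((Commute.one_left _).smul_left _))

theorem analyticOrderAt_ι_shiftProd (a : ℕ → ℂ) (n : ℕ) (h : H) {ζ : ℂ} (hζ : ζ ∈ Ω) :
    analyticOrderAt (F.ι (F.shiftProd a n h)) ζ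
      = #{i ∈ range n | a i = ζ} + analyticOrderAt (F.ι h) ζ := by
  rw [← analyticOrderAt_prod_sub, ← analyticOrderAt_mul (by fun_prop) (F.analyticAt_ι h hζ)]
  refine analyticOrderAt_congr ?_
  filter_upwards [F.isOpen.mem_nhds hζ] with z hz using F.ι_shiftProd a n h hz

theorem S_sub_smul_Q {a : ℂ} (ha : a ∈ Ω) {g : H} (hg : F.ι g a = 0) :
    (F.S - a • 1) (F.Q a g) = g := by
  refine F.ι_inj _ _ fun z hz => ?_
  rw [F.ι_S_sub_smul _ _ hz]
  rcases eq_or_ne z a with rfl | hza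
  · rw [sub_self, zero_mul, hg]
  · rw [F.ι_Q a ha g z hz hza, hg, sub_zero, mul_div_cancel₀ _ (sub_ne_zero.2 hza)]

theorem exists_eq_shiftProd {a : ℕ → ℂ} (ha : ∀ i, a i ∈ Ω) (n : ℕ) {g : H}
    (hg : ∀ ζ ∈ Ω, (#{i ∈ range n | a i = ζ} : ℕ∞) ≤ analyticOrderAt (F.ι g) ζ) :
    ∃ h, g = F.shiftProd a n h := by
  induction n with
  | zero => exact ⟨g, by simp [shiftProd]⟩
  | succ n ih =>
    have hcard (ζ : ℂ) : #{i ∈ range (n + 1) | a i = ζ}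
        = #{i ∈ range n | a i = ζ} + if a n = ζ then 1 else 0 := by
      rw [range_add_one, filter_insert]
      split_ifs with h <;> simp [h]
    obtain ⟨h, rfl⟩ := ih fun ζ hζ =>
      le_trans (Nat.cast_le.2 (by rw [hcard]; exact Nat.le_add_right _ _)) (hg ζ hζ)
    have hord : 1 ≤ analyticOrderAt (F.ι h) (a n) := by
      have := hg (a n) (ha n)
      rwa [hcard, F.analyticOrderAt_ι_shiftProd a n h (ha n), if_pos rfl, Nat.cast_add,
        Nat.cast_one, ENat.add_le_add_iff_left (ENat.natCast_ne_top _)] at this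
    have hh : F.ι h (a n) = 0 :=
      apply_eq_zero_of_analyticOrderAt_ne_zero (Order.one_le_iff_ne_zero.1 hord)
    exact ⟨F.Q (a n) h, by rw [shiftProd, mul_apply_eq_comp, F.S_sub_smul_Q (ha n) hh]⟩

theorem fullSpan_p_zero : F.fullSpan (F.p 0) = ⊤ := by
  have hp : (fun n => (F.S ^ n) (F.p 0)) = F.p := funext fun n =>
    F.ι_inj _ _ fun z hz => by rw [F.ι_S_pow n _ hz, F.ι_p 0 z hz, F.ι_p n z hz, pow_zero, mul_one]
  rw [fullSpan, hp, F.span_p]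

theorem iteratedDerivWithin_eq_zero_of_mem_fullSpan {f v : H} {z : ℂ} (hz : z ∈ Ω) {s : ℕ}
    (hs : (s : ℕ∞) < analyticOrderAt (F.ι f) z) (hv : v ∈ F.fullSpan f) :
    iteratedDerivWithin s (F.ι v) Ω z = 0 := by
  rw [← F.iteratedDerivEval_apply hz]
  refine (F.iteratedDerivEval hz s).apply_mem_of_mem_closure_span (K := ⊥) isClosed_singleton
    ?_ hv
  rintro _ ⟨n, rfl⟩
  have hord : analyticOrderAt (F.ι f) z ≤ analyticOrderAt (F.ι ((F.S ^ n) f)) z := by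
    have hev : F.ι ((F.S ^ n) f) =ᶠ[𝓝 z] (· ^ n) * F.ι f := by
      filter_upwards [F.isOpen.mem_nhds hz] with y hy using F.ι_S_pow n f hy
    rw [analyticOrderAt_congr hev, analyticOrderAt_mul (by fun_prop) (F.analyticAt_ι f hz)]
    exact le_add_self
  rw [Submodule.mem_bot, iteratedDerivEval_apply, iteratedDerivWithin_of_isOpen F.isOpen hz]
  exact (natCast_le_analyticOrderAt_iff_iteratedDeriv_eq_zero (F.analyticAt_ι _ hz)).1
    (Order.add_one_le_of_lt (hs.trans_le hord)) s (Nat.lt_succ_self s)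

/-- `g' = g / z ^ r`, where `r` is the order of the zero of `ι g` at the origin. -/
theorem exists_ι_zero_ne_zero {g : H} (hg : g ≠ 0) :
    ∃ g', F.ι g' 0 ≠ 0 ∧
      ∀ ζ ∈ Ω, ζ ≠ 0 → analyticOrderAt (F.ι g) ζ = analyticOrderAt (F.ι g') ζ := by
  have hfin : analyticOrderAt (F.ι g) 0 ≠ ⊤ := fun htop => hg <| F.ι_inj _ _ fun z hz => by
    simpa using
      ((F.analytic g).analyticOnNhd F.isOpen).eqOn_zero_of_preconnected_of_eventuallyEq_zero
        F.isConnected.isPreconnected F.zero_mem (analyticOrderAt_eq_top.1 htop) hz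
  set r := analyticOrderNatAt (F.ι g) 0
  have hr : (r : ℕ∞) = analyticOrderAt (F.ι g) 0 := Nat.cast_analyticOrderNatAt hfin
  have hcard (ζ : ℂ) : #{i ∈ range r | (0 : ℂ) = ζ} = if ζ = 0 then r else 0 := by
    rcases eq_or_ne ζ 0 with rfl | hζ
    · simp
    · simp [hζ, hζ.symm]
  obtain ⟨g', hg'⟩ := F.exists_eq_shiftProd (g := g) (a := fun _ => 0) (fun _ => F.zero_mem) r
    fun ζ hζ => by rw [hcard]; split_ifs with h <;> simp [h, hr]
  have hord (ζ : ℂ) (hζ : ζ ∈ Ω) : analyticOrderAt (F.ι g) ζ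
      = (if ζ = 0 then r else 0 : ℕ) + analyticOrderAt (F.ι g') ζ := by
    rw [hg', F.analyticOrderAt_ι_shiftProd _ r g' hζ, hcard]
  refine ⟨g', (F.analyticAt_ι g' F.zero_mem).analyticOrderAt_eq_zero.1 ?_,
    fun ζ hζ hζ0 => by simp [hord ζ hζ, hζ0]⟩
  have h0 := hord 0 F.zero_mem
  rw [if_pos rfl, ← hr] at h0
  exact nonpos_iff_eq_zero.1 <|
    (ENat.add_le_add_iff_left (ENat.natCast_ne_top r)).1 (by rw [add_zero]; exact h0.ge)

def VanishesOnSeq (w : ℕ → ℂ) (g : H) : Prop :=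
  ∀ z ∈ Ω, ∀ s : ℕ, (s : ℕ∞) < {j : ℕ | w j = z}.encard → iteratedDerivWithin s (F.ι g) Ω z = 0

section Sequence

variable {w : ℕ → ℂ} {f : ℕ → H}
  (hf : ∀ n : ℕ, ∀ z ∈ Ω, F.ι (f n) z = ∏ j ∈ range n, (1 - z / w j))
include hf

theorem ι_f_zero (n : ℕ) : F.ι (f n) 0 = 1 := by
  simp [hf n 0 F.zero_mem]

theorem f_succ (n : ℕ) : f (n + 1) = f n - (w n)⁻¹ • F.S (f n) := by
  refine F.ι_inj _ _ fun z hz => ?_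
  simp only [map_sub, map_smul, Pi.sub_apply, Pi.smul_apply, smul_eq_mul, F.ι_S _ z hz,
    hf _ z hz, prod_range_succ]
  ring

theorem antitone_fullSpan_f : Antitone fun n => F.fullSpan (f n) := by
  refine antitone_nat_of_succ_le fun n => F.fullSpan_le_of_mem ?_
  rw [F.f_succ hf n]
  exact sub_mem (F.self_mem_fullSpan _)
    (Submodule.smul_mem _ _ (by simpa using F.S_pow_mem_fullSpan (f n) 1))

theorem monotone_norm_J_f : Monotone fun n => ‖F.J (f n)‖ := by
  refine monotone_nat_of_le_succ fun n => F.norm_J_le_norm_J ?_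
  rw [F.f_succ hf n, sub_sub_cancel_left]
  exact neg_mem (Submodule.smul_mem _ _ (by simpa using F.S_pow_mem_zspan (f n) le_rfl))

theorem f_eq_smul_shiftProd (hw : ∀ j, w j ≠ 0) (n : ℕ) :
    f n = (∏ i ∈ range n, -(w i)⁻¹) • F.shiftProd w n (F.p 0) := by
  refine F.ι_inj _ _ fun z hz => ?_
  rw [map_smul, Pi.smul_apply, smul_eq_mul, F.ι_shiftProd w n _ hz, F.ι_p 0 z hz, pow_zero,
    mul_one, hf n z hz, prod_one_sub_div_eq hw]

theorem analyticOrderAt_ι_f (hw : ∀ j, w j ≠ 0) (n : ℕ) {z : ℂ} (hz : z ∈ Ω) :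
    analyticOrderAt (F.ι (f n)) z = #{i ∈ range n | w i = z} := by
  have hev : F.ι (f n) =ᶠ[𝓝 z]
      (fun _ => ∏ i ∈ range n, -(w i)⁻¹) * fun y => ∏ i ∈ range n, (y - w i) := by
    filter_upwards [F.isOpen.mem_nhds hz] with y hy
    rw [hf n y hy, prod_one_sub_div_eq hw, Pi.mul_apply]
  rw [analyticOrderAt_congr hev, analyticOrderAt_mul analyticAt_const (by fun_prop),
    analyticAt_const.analyticOrderAt_eq_zero.2 (prod_neg_inv_ne_zero hw n), zero_add,
    analyticOrderAt_prod_sub]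

theorem mem_fullSpan_f_of_card_le_analyticOrderAt (hw : ∀ j, w j ∈ Ω ∧ w j ≠ 0) (n : ℕ) {g : H}
    (hg : ∀ ζ ∈ Ω, (#{i ∈ range n | w i = ζ} : ℕ∞) ≤ analyticOrderAt (F.ι g) ζ) :
    g ∈ F.fullSpan (f n) := by
  obtain ⟨h, rfl⟩ := F.exists_eq_shiftProd (fun i => (hw i).1) n hg
  have hp : F.shiftProd w n (F.p 0) ∈ F.fullSpan (f n) := by
    convert Submodule.smul_mem _ (∏ i ∈ range n, -(w i)⁻¹)⁻¹ (F.self_mem_fullSpan (f n)) using 1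
    rw [F.f_eq_smul_shiftProd hf (fun i => (hw i).2) n,
      inv_smul_smul₀ (prod_neg_inv_ne_zero (fun i => (hw i).2) n)]
  exact F.fullSpan_le_of_mem hp
    (F.map_mem_fullSpan (F.commute_shiftProd w n) (F.fullSpan_p_zero ▸ Submodule.mem_top))

theorem bddAbove_norm_J_f_of_vanishesOnSeq (hw : ∀ j, w j ∈ Ω ∧ w j ≠ 0) {g : H} (hg : g ≠ 0)
    (hvan : F.VanishesOnSeq w g) :
    BddAbove (Set.range fun n : ℕ => ‖F.J (f n)‖) := by
  obtain ⟨g', hg'0, hord⟩ := F.exists_ι_zero_ne_zero hg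
  have hmem (n : ℕ) : g' ∈ F.fullSpan (f n) := by
    refine F.mem_fullSpan_f_of_card_le_analyticOrderAt hf hw n fun ζ hζ => ?_
    rcases eq_or_ne ζ 0 with rfl | hζ0
    · simp [(hw _).2]
    rw [← hord ζ hζ hζ0, natCast_le_analyticOrderAt_iff_iteratedDeriv_eq_zero (F.analyticAt_ι g hζ)]
    intro s hs
    rw [← iteratedDerivWithin_of_isOpen F.isOpen hζ]
    exact hvan ζ hζ s ((Nat.cast_lt.2 hs).trans_le (card_filter_range_le_encard _ n))
  refine ⟨‖g'‖ / ‖F.ι g' 0‖, ?_⟩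
  rintro _ ⟨n, rfl⟩
  rw [le_div_iff₀ (norm_pos_iff.2 hg'0)]
  exact F.norm_J_mul_norm_ι_zero_le (F.ι_f_zero hf n) (hmem n)

theorem exists_vanishesOnSeq_of_bddAbove_norm_J_f (hw : ∀ j, w j ≠ 0)
    (hB : BddAbove (Set.range fun n : ℕ => ‖F.J (f n)‖)) :
    ∃ g : H, g ≠ 0 ∧ F.VanishesOnSeq w g := by
  obtain ⟨B, hB⟩ := hB
  have hJ (n : ℕ) : 0 < ‖F.J (f n)‖ := norm_pos_iff.2 (F.J_ne_zero (F.ι_f_zero hf n))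
  have hJB (n : ℕ) : ‖F.J (f n)‖ ≤ B := hB ⟨n, rfl⟩
  obtain ⟨g, hgmem, hlim⟩ := Submodule.exists_tendsto_starProjection_of_antitone
    (fun n => F.fullSpan (f n)) (F.antitone_fullSpan_f hf) (F.k 0)
  refine ⟨g, fun hg0 => ?_, fun z hz s hs => ?_⟩
  · have hBg : B⁻¹ ≤ ‖g‖ := ge_of_tendsto' hlim.norm fun n => by
      rw [F.norm_starProjection_fullSpan_k_zero (F.ι_f_zero hf n)]
      exact inv_anti₀ (hJ n) (hJB n)
    rw [hg0, norm_zero] at hBg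
    exact (inv_pos.2 ((hJ 0).trans_le (hJB 0))).not_ge hBg
  · obtain ⟨n, hn⟩ := exists_lt_card_filter_range hs
    refine F.iteratedDerivWithin_eq_zero_of_mem_fullSpan hz ?_ (hgmem n)
    rw [F.analyticOrderAt_ι_f hf hw n hz]
    exact_mod_cast hn

end Sequence

end RKFramework

/-- Theorem 4.4 (Shapiro–Shields, recast): for `fₙ` realizing `∏_{j<n} (1 − z/wⱼ)` and
`Jₙ = fₙ − P_{[z fₙ]} fₙ`: (1) each `Jₙ` is `S`-inner; (2) `‖Jₙ‖` is nondecreasing;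
(3) `(wⱼ)` is a zero set for `H` (counting multiplicities) iff `sup ‖Jₙ‖ < ∞`. -/
theorem stmt7 (F : RKFramework Ω H)
    (w : ℕ → ℂ) (hw : ∀ j, w j ∈ Ω ∧ w j ≠ 0)
    (f : ℕ → H)
    (hf : ∀ n : ℕ, ∀ z ∈ Ω, F.ι (f n) z = ∏ j ∈ Finset.range n, (1 - z / w j)) :
    (∀ n : ℕ, ∀ m : ℕ, 1 ≤ m → ⟪F.J (f n), (F.S ^ m) (F.J (f n))⟫ = 0) ∧
    (Monotone fun n : ℕ => ‖F.J (f n)‖) ∧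
    ((∃ g : H, g ≠ 0 ∧ ∀ z ∈ Ω, ∀ s : ℕ, (s : ℕ∞) < {j : ℕ | w j = z}.encard →
        iteratedDerivWithin s (F.ι g) Ω z = 0) ↔
      BddAbove (Set.range fun n : ℕ => ‖F.J (f n)‖)) :=
  ⟨fun n _ hm => F.inner_J_S_pow_J (f n) hm, F.monotone_norm_J_f hf,
    fun ⟨_, hg, hvan⟩ => F.bddAbove_norm_J_f_of_vanishesOnSeq hf hw hg hvan,
    F.exists_vanishesOnSeq_of_bddAbove_norm_J_f hf fun j => (hw j).2⟩
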